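/- For all integers d ≥ 1 and n ≥ 1, the rational function ({(d+1)n-d}/{n}) · {2(n-1):d choose n-1:d}_L is a polynomial in s and t all of whose coefficients are nonnegative integers. (Formally: there exists p ∈ Z[s,t] with all coefficients nonnegative such that {(d+1)n-d} · {2(n-1):d}! · ({n-1:d}!)^{-2} = p·{n}, i.e. {n}·{n-1:d}!·{n-1:d}!·p = {(d+1)n-d}·{2(n-1):d}!.) -/

import Mathlib

/-!
Write `n = N + 1`. The addition formula `{a+b+1} = {a+1}{b+1} + t{a}{b}` gives
`{dN+N+1} = {dN+1}{N+1} + t{dN}{N}`, so the quantity equals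
`{dN+1}·{2N:d choose N:d} + t{N}·({dN}/{N+1})·{2N:d choose N:d}`.
The d-divisible Lucasnomials lie in `ℕ[s,t]` by a Pascal-type recurrence with coefficients in
`ℕ[s,t]`, and `({dN}/{N+1})·{2N:d choose N:d} = ({d(N+1)}/{N+1})·{2N:d choose N-1:d}`,
where `{N+1}` divides `{d(N+1)}` with quotient in `ℕ[s,t]`.
-/

open MvPolynomial Finset

noncomputable section

/-- Polynomial ring ℤ[s,t] with s = X 0, t = X 1. -/
abbrev P2 : Type := MvPolynomial (Fin 2) ℤ

def ps : P2 := X 0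
def pt : P2 := X 1

/-- The Lucas sequence of polynomials: {0}=0, {1}=1, {n}=s{n-1}+t{n-2}. -/
def lucas : ℕ → P2
  | 0 => 0
  | 1 => 1
  | (n+2) => ps * lucas (n+1) + pt * lucas n

/-- The Lucastorial {n}! = {1}{2}⋯{n}. -/
def lucasFact (n : ℕ) : P2 := ∏ i ∈ Finset.range n, lucas (i+1)

/-- The d-divisible Lucastorial {n:d}! = {d}{2d}⋯{nd}. -/
def lucasFactD (d n : ℕ) : P2 := ∏ i ∈ Finset.range n, lucas (d*(i+1))

/-- A polynomial lies in ℕ[s,t]: all coefficients are nonnegative. -/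
def Nonneg (p : P2) : Prop := ∀ m, 0 ≤ p.coeff m

/-- The fraction field ℤ(s,t). -/
abbrev K : Type := FractionRing P2

def φ : P2 →+* K := algebraMap P2 K

def L (n : ℕ) : K := φ (lucas n)

def LFact (n : ℕ) : K := φ (lucasFact n)

def LFactD (d n : ℕ) : K := φ (lucasFactD d n)

/-- The Lucasnomial {n choose k}, as an element of the fraction field. -/
def lnom (n k : ℕ) : K := LFact n / (LFact k * LFact (n-k))

/-- The d-divisible Lucasnomial {n:d choose k:d}, as an element of the fraction field. -/
def lnomD (d n k : ℕ) : K := LFactD d n / (LFactD d k * LFactD d (n-k))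

/-- The Lucas-Catalan number C_{n} = (1/{n+1}) {2n choose n}. -/
def catL (n : ℕ) : K := lnom (2*n) n / L (n+1)

/-- The Lucas-Fuss-Catalan number C_{n,k} = (1/{kn+1}) {(k+1)n choose n}. -/
def fussCatL (n k : ℕ) : K := lnom ((k+1)*n) n / L (k*n+1)

lemma lucas_add_two (n : ℕ) : lucas (n + 2) = ps * lucas (n + 1) + pt * lucas n := rfl

lemma lucas_add_add_one (a b : ℕ) :
    lucas (a + b + 1) = lucas (a + 1) * lucas (b + 1) + pt * lucas a * lucas b := by
  induction a generalizing b with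
  | zero => simp [lucas]
  | succ a ih =>
    rw [show a + 1 + b + 1 = a + (b + 1) + 1 by omega, ih, lucas_add_two, lucas_add_two]
    ring

lemma eval_one_lucas (n : ℕ) : eval 1 (lucas n) = Nat.fib n := by
  induction n using Nat.twoStepInduction with
  | zero => simp [lucas]
  | one => simp [lucas]
  | more n ih ih' =>
    rw [lucas_add_two, Nat.fib_add_two]
    simp [ps, pt, ih, ih', add_comm]

lemma lucas_ne_zero {n : ℕ} (hn : 0 < n) : lucas n ≠ 0 := fun h => by
  have hfib := eval_one_lucas n
  rw [h, map_zero] at hfib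
  exact (Nat.fib_pos.2 hn).ne' (by exact_mod_cast hfib.symm)

lemma lucasFactD_succ (d n : ℕ) : lucasFactD d (n + 1) = lucasFactD d n * lucas (d * (n + 1)) :=
  prod_range_succ _ _

lemma lucasFactD_ne_zero {d : ℕ} (hd : 0 < d) (n : ℕ) : lucasFactD d n ≠ 0 :=
  prod_ne_zero_iff.2 fun i _ => lucas_ne_zero (by positivity)

def natPoly : Subsemiring P2 where
  carrier := {p | Nonneg p}
  zero_mem' m := by simp
  one_mem' m := by
    classical
    rw [coeff_one]
    split_ifs <;> norm_num
  add_mem' {p q} hp hq m := by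
    rw [coeff_add]
    exact add_nonneg (hp m) (hq m)
  mul_mem' {p q} hp hq m := by
    classical
    rw [coeff_mul]
    exact sum_nonneg fun x _ => mul_nonneg (hp _) (hq _)

lemma X_mem_natPoly (i : Fin 2) : X i ∈ natPoly := fun m => by
  classical
  rw [coeff_X]
  split_ifs <;> norm_num

lemma lucas_mem_natPoly (n : ℕ) : lucas n ∈ natPoly := by
  induction n using Nat.twoStepInduction with
  | zero => exact zero_mem _
  | one => exact one_mem _
  | more n ih ih' =>
    rw [lucas_add_two]
    exact add_mem (mul_mem (X_mem_natPoly 0) ih') (mul_mem (X_mem_natPoly 1) ih)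

lemma pt_mul_lucas_mem_natPoly (n : ℕ) : pt * lucas n ∈ natPoly :=
  mul_mem (X_mem_natPoly 1) (lucas_mem_natPoly n)

def NatPolyDvd (a b : P2) : Prop := ∃ c ∈ natPoly, b = a * c

lemma natPolyDvd_lucas_mul (k n : ℕ) : NatPolyDvd (lucas n) (lucas (k * n)) := by
  rcases n with _ | n
  · exact ⟨0, zero_mem _, by simp [lucas]⟩
  induction k with
  | zero => exact ⟨0, zero_mem _, by simp [lucas]⟩
  | succ k ih =>
    obtain ⟨q, hq, hkn⟩ := ih
    refine ⟨lucas (k * (n + 1) + 1) + pt * lucas n * q,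
      add_mem (lucas_mem_natPoly _) (mul_mem (pt_mul_lucas_mem_natPoly n) hq),
      ?_⟩
    rw [show (k + 1) * (n + 1) = k * (n + 1) + n + 1 by ring, lucas_add_add_one, hkn]
    ring

lemma natPolyDvd_lucasFactD {d : ℕ} (hd : 0 < d) :
    ∀ k m, NatPolyDvd (lucasFactD d k * lucasFactD d m) (lucasFactD d (k + m))
  | 0, m => ⟨1, one_mem _, by simp [lucasFactD]⟩
  | k + 1, 0 => ⟨1, one_mem _, by simp [lucasFactD]⟩
  | k + 1, m + 1 => by
    obtain ⟨b, hb, hkm⟩ := natPolyDvd_lucasFactD hd k (m + 1)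
    obtain ⟨c, hc, hkm'⟩ := natPolyDvd_lucasFactD hd (k + 1) m
    refine ⟨lucas (d * (m + 1) + 1) * b + pt * lucas (d * (k + 1) - 1) * c,
      add_mem (mul_mem (lucas_mem_natPoly _) hb)
        (mul_mem (pt_mul_lucas_mem_natPoly _) hc), ?_⟩
    have hsplit := lucas_add_add_one (d * (m + 1)) (d * (k + 1) - 1)
    rw [Nat.add_assoc, Nat.sub_add_cancel (Nat.mul_pos hd k.succ_pos), ← Nat.mul_add,
      show m + 1 + (k + 1) = k + 1 + m + 1 by ring] at hsplit
    rw [show k + (m + 1) = k + 1 + m by ring] at hkm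
    rw [show k + 1 + (m + 1) = k + 1 + m + 1 by ring, lucasFactD_succ, hsplit]
    rw [lucasFactD_succ d k] at hkm' ⊢
    rw [lucasFactD_succ d m] at hkm ⊢
    linear_combination (lucas (d * (m + 1) + 1) * lucas (d * (k + 1))) * hkm
      + (pt * lucas (d * (m + 1)) * lucas (d * (k + 1) - 1)) * hkm'

lemma natPolyDvd_lucas_mul_lucasFactD {d : ℕ} (hd : 0 < d) (m : ℕ) :
    ∀ k, NatPolyDvd (lucas (m + 1) * lucasFactD d k * lucasFactD d m)
      (lucas (d * k) * lucasFactD d (k + m))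
  | 0 => ⟨0, zero_mem _, by simp [lucas]⟩
  | k + 1 => by
    obtain ⟨b, hb, hkm⟩ := natPolyDvd_lucasFactD hd k (m + 1)
    obtain ⟨q, hq, hm⟩ := natPolyDvd_lucas_mul d (m + 1)
    refine ⟨b * q, mul_mem hb hq, ?_⟩
    rw [show k + 1 + m = k + (m + 1) by ring, hkm, lucasFactD_succ d k, lucasFactD_succ d m,
      mul_comm d, hm]
    ring

lemma map_div_map_eq {a b c : P2} (ha : a ≠ 0) (h : b = a * c) : φ b / φ a = φ c := by
  have hφa : φ a ≠ 0 := fun h0 => ha (IsFractionRing.injective P2 K (h0.trans (map_zero φ).symm))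
  rw [div_eq_iff hφa, h, map_mul, mul_comm]

/-- for d ≥ 1, n ≥ 1, the rational function
({(d+1)n-d}/{n}) {2(n-1):d choose n-1:d} lies in ℕ[s,t]. -/
theorem dDivisible_catalanD (d n : ℕ) (hd : 1 ≤ d) (hn : 1 ≤ n) :
    ∃ p : P2, Nonneg p ∧
      L ((d+1)*n - d) / L n * lnomD d (2*(n-1)) (n-1) = φ p := by
  obtain ⟨N, rfl⟩ := Nat.exists_eq_add_of_le' hn
  obtain ⟨b, hb, hcentral⟩ := natPolyDvd_lucasFactD hd N N
  obtain ⟨c, hc, hshift⟩ := natPolyDvd_lucas_mul_lucasFactD hd N N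
  refine ⟨lucas (d * N + 1) * b + pt * lucas N * c,
    add_mem (mul_mem (lucas_mem_natPoly _) hb)
      (mul_mem (pt_mul_lucas_mem_natPoly N) hc), ?_⟩
  have hnum : (d + 1) * (N + 1) - d = d * N + N + 1 := by
    rw [Nat.sub_eq_iff_eq_add (by nlinarith)]
    ring
  have hden : lucas (N + 1) * (lucasFactD d N * lucasFactD d N) ≠ 0 :=
    mul_ne_zero (lucas_ne_zero N.succ_pos)
      (mul_ne_zero (lucasFactD_ne_zero hd N) (lucasFactD_ne_zero hd N))
  simp only [lnomD, L, LFactD, hnum, Nat.add_sub_cancel, two_mul]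
  rw [div_mul_div_comm, ← map_mul, ← map_mul, ← map_mul]
  refine map_div_map_eq hden ?_
  rw [lucas_add_add_one]
  linear_combination (lucas (d * N + 1) * lucas (N + 1)) * hcentral + (pt * lucas N) * hshift
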